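/- Let K be a field of characteristic zero, ℓ ≥ 1 an integer, and for each i in {0,…,ℓ−1} let p_i and q_i be polynomials in one variable x with coefficients in the field K(z) of rational functions, such that q_i evaluated at every natural number is a nonzero element of K(z). Define a_k := p_i(k)/q_i(k) where i = k mod ℓ, and let (P_k) and (Q_k) be the sequences in K(z) defined by P_{−1} = 1, P_0 = 0, Q_{−1} = 0, Q_0 = 1 and, for k ≥ 1, P_k = P_{k−1} + a_k·P_{k−2} and Q_k = Q_{k−1} + a_k·Q_{k−2}. Then (P_k) and (Q_k) are P-recursive sequences over K(z). -/

import Mathlib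

/-!
Clearing denominators with `D = ∏ qᵢ`, induction on `k` gives polynomials `C_k`, nonvanishing
on `ℕ`, and `A_{k,r}`, `B_{k,r}` with
`C_k(n) u(n+k) = A_{k, n mod ℓ}(n) u(n) + B_{k, n mod ℓ}(n) u(n+1)`.
Thus `u(n), …, u(n+2ℓ)` are combinations, with polynomial coefficients evaluated at `n`, of the
`2ℓ` sequences `[n ≡ r] u(n)` and `[n ≡ r] u(n+1)`. Any `2ℓ+1` vectors of `L[X]^{2ℓ}` are
linearly dependent over `L[X]`, and a dependence between the coefficient vectors is a
recurrence for `u`.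
-/

/-- A sequence `u : ℕ → L` with values in a field `L` is P-recursive if it satisfies
a nontrivial linear recurrence with polynomial coefficients. -/
def IsPRecursive {L : Type*} [Field L] (u : ℕ → L) : Prop :=
  ∃ (r : ℕ) (p : Fin (r + 1) → Polynomial L),
    (∃ i, p i ≠ 0) ∧
    ∀ n : ℕ, ∑ i : Fin (r + 1), Polynomial.eval (n : L) (p i) * u (n + (i : ℕ)) = 0

open Polynomial Finset

section

variable {L : Type*} [Field L]

theorem IsPRecursive.of_mul_eq_sum {ι : Type*} [Fintype ι] {u : ℕ → L} (w : ι → ℕ → L)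
    {r : ℕ} (hr : Fintype.card ι ≤ r) (c : Fin (r + 1) → L[X]) (f : Fin (r + 1) → ι → L[X])
    (hc : ∀ k (n : ℕ), eval (n : L) (c k) ≠ 0)
    (h : ∀ k (n : ℕ), eval (n : L) (c k) * u (n + k) = ∑ j, eval (n : L) (f k j) * w j n) :
    IsPRecursive u := by
  set E : Fin (r + 1) → L[X] := fun k => ∏ i ∈ univ.erase k, c i
  have hdep : ¬ LinearIndependent L[X] fun k j => f k j * E k := fun hli => by
    have := hli.fintype_card_le_finrank
    rw [Module.finrank_fintype_fun_eq_card, Fintype.card_fin] at this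
    omega
  obtain ⟨g, hg, k₀, hk₀⟩ := Fintype.not_linearIndependent_iff.1 hdep
  refine ⟨r, g, ⟨k₀, hk₀⟩, fun n => ?_⟩
  have hprod : ∏ k, eval (n : L) (c k) ≠ 0 := prod_ne_zero_iff.2 fun k _ => hc k n
  refine (mul_eq_zero.1 ?_).resolve_left hprod
  calc (∏ k, eval (n : L) (c k)) * ∑ k, eval (n : L) (g k) * u (n + k)
      = ∑ k, eval (n : L) (g k) * eval (n : L) (E k) * (eval (n : L) (c k) * u (n + k)) := by
        rw [mul_sum]
        refine sum_congr rfl fun k _ => ?_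
        rw [← mul_prod_erase _ _ (mem_univ k), eval_prod]
        ring
    _ = ∑ j, eval (n : L) (∑ k, g k * (f k j * E k)) * w j n := by
        simp only [h, mul_sum, eval_finsetSum, sum_mul, eval_mul]
        rw [sum_comm]
        refine sum_congr rfl fun j _ => sum_congr rfl fun k _ => ?_
        ring
    _ = 0 := by
        refine sum_eq_zero fun j _ => ?_
        have := congrFun hg j
        simp only [Finset.sum_apply, Pi.smul_apply, smul_eq_mul, Pi.zero_apply] at this
        rw [this, eval_zero, zero_mul]

theorem IsPRecursive.of_mul_eq_periodic {ℓ : ℕ} (hℓ : 0 < ℓ) {u : ℕ → L} (C : ℕ → L[X])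
    (A B : ℕ → ℕ → L[X]) (hC : ∀ k (n : ℕ), eval (n : L) (C k) ≠ 0)
    (h : ∀ k n : ℕ, eval (n : L) (C k) * u (n + k) =
      eval (n : L) (A k (n % ℓ)) * u n + eval (n : L) (B k (n % ℓ)) * u (n + 1)) :
    IsPRecursive u := by
  refine .of_mul_eq_sum (r := 2 * ℓ)
    (fun (j : Fin ℓ × Fin 2) n => if n % ℓ = j.1 then u (n + j.2) else 0) (by simp [mul_comm])
    (fun k => C k) (fun k j => ![A k j.1, B k j.1] j.2) (fun k => hC k)
    fun k n => ?_
  rw [h, Fintype.sum_prod_type, sum_eq_single ⟨n % ℓ, Nat.mod_lt n hℓ⟩]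
  · simp
  · intro i _ hi
    refine sum_eq_zero fun e _ => ?_
    rw [if_neg fun h' => hi (Fin.ext h'.symm), mul_zero]
  · simp

theorem exists_common_denominator {ℓ : ℕ} (hℓ : 0 < ℓ) {p q : ℕ → L[X]}
    (hq : ∀ i < ℓ, ∀ k : ℕ, eval (k : L) (q i) ≠ 0) {a : ℕ → L}
    (ha : ∀ k : ℕ, a k = eval (k : L) (p (k % ℓ)) / eval (k : L) (q (k % ℓ))) :
    ∃ (D : L[X]) (N : ℕ → L[X]), (∀ k : ℕ, eval (k : L) D ≠ 0) ∧
      ∀ k : ℕ, eval (k : L) D * a k = eval (k : L) (N (k % ℓ)) := by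
  refine ⟨∏ i ∈ range ℓ, q i, fun s => p s * ∏ i ∈ (range ℓ).erase s, q i,
    fun k => ?_, fun k => ?_⟩
  · rw [eval_prod]
    exact prod_ne_zero_iff.2 fun i hi => hq i (mem_range.1 hi) k
  · have hs := Nat.mod_lt k hℓ
    rw [← mul_prod_erase _ _ (mem_range.2 hs), ha]
    simp only [eval_mul, eval_prod]
    field_simp [hq _ hs k]

theorem exists_mul_eq_periodic {ℓ : ℕ} {D : L[X]} {N : ℕ → L[X]}
    (hD : ∀ k : ℕ, eval (k : L) D ≠ 0) {a : ℕ → L}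
    (hDN : ∀ k : ℕ, eval (k : L) D * a k = eval (k : L) (N (k % ℓ)))
    {u : ℕ → L} (hu : ∀ k, u (k + 2) = u (k + 1) + a (k + 1) * u k) (k : ℕ) :
    ∃ (C : L[X]) (A B : ℕ → L[X]), (∀ n : ℕ, eval (n : L) C ≠ 0) ∧
      ∀ n : ℕ, eval (n : L) C * u (n + k) =
        eval (n : L) (A (n % ℓ)) * u n + eval (n : L) (B (n % ℓ)) * u (n + 1) := by
  induction k with
  | zero => exact ⟨1, fun _ => 1, fun _ => 0, by simp, by simp⟩
  | succ k ih =>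
    obtain ⟨C, A, B, hC, h⟩ := ih
    have eval_shift (f : L[X]) (n : ℕ) :
        eval (n : L) (f.comp (X + 1)) = eval ((n + 1 : ℕ) : L) f := by
      simp
    refine ⟨(C * D).comp (X + 1),
      fun r => (B ((r + 1) % ℓ) * N ((r + 1) % ℓ)).comp (X + 1),
      fun r => ((A ((r + 1) % ℓ) + B ((r + 1) % ℓ)) * D).comp (X + 1),
      fun n => ?_, fun n => ?_⟩
    · rw [eval_shift, eval_mul]
      exact mul_ne_zero (hC _) (hD _)
    · have hrec : eval ((n + 1 : ℕ) : L) D * u (n + 2) =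
          eval ((n + 1 : ℕ) : L) D * u (n + 1) +
            eval ((n + 1 : ℕ) : L) (N ((n + 1) % ℓ)) * u n := by
        rw [hu, ← hDN]; ring
      simp only [eval_shift, eval_mul, eval_add, Nat.mod_add_mod]
      rw [show n + (k + 1) = n + 1 + k by omega]
      linear_combination eval ((n + 1 : ℕ) : L) D * h (n + 1) +
        eval ((n + 1 : ℕ) : L) (B ((n + 1) % ℓ)) * hrec

theorem IsPRecursive.of_periodic_continuant {ℓ : ℕ} (hℓ : 0 < ℓ) {p q : ℕ → L[X]}
    (hq : ∀ i < ℓ, ∀ k : ℕ, eval (k : L) (q i) ≠ 0) {a : ℕ → L}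
    (ha : ∀ k : ℕ, a k = eval (k : L) (p (k % ℓ)) / eval (k : L) (q (k % ℓ)))
    {u : ℕ → L} (hu : ∀ k, u (k + 2) = u (k + 1) + a (k + 1) * u k) :
    IsPRecursive u := by
  obtain ⟨D, N, hD, hDN⟩ := exists_common_denominator hℓ hq ha
  choose C A B hC h using exists_mul_eq_periodic hD hDN hu
  exact .of_mul_eq_periodic hℓ C A B hC h

end

theorem convergents_isPRecursive_general {K : Type*} [Field K]
    (ℓ : ℕ) (hℓ : 1 ≤ ℓ)
    (p q : ℕ → Polynomial (RatFunc K))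
    (hq : ∀ i < ℓ, ∀ k : ℕ, Polynomial.eval ((k : RatFunc K)) (q i) ≠ 0)
    (a : ℕ → RatFunc K)
    (ha : ∀ k : ℕ, a k =
      Polynomial.eval ((k : RatFunc K)) (p (k % ℓ)) /
        Polynomial.eval ((k : RatFunc K)) (q (k % ℓ)))
    (P Q : ℕ → RatFunc K)
    -- `P 0, Q 0` stand for `P₋₁, Q₋₁` and `P (k+1), Q (k+1)` for `P_k, Q_k`
    (hPrec : ∀ k : ℕ, P (k + 2) = P (k + 1) + a (k + 1) * P k)
    (hQrec : ∀ k : ℕ, Q (k + 2) = Q (k + 1) + a (k + 1) * Q k) :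
    IsPRecursive P ∧ IsPRecursive Q :=
  ⟨.of_periodic_continuant hℓ hq ha hPrec, .of_periodic_continuant hℓ hq ha hQrec⟩

/-- **Lemma (numerators and denominators of interlaced-rational continued fractions
are P-recursive).**
Let the partial numerators be `a_k = p_{k mod ℓ}(k)/q_{k mod ℓ}(k)` with
`p_i, q_i ∈ K(z)[x]` and `q_i` nonvanishing at every natural number, and let
`(P_k)` and `(Q_k)` be the numerator and denominator sequences of the continued
fraction (indexed so that index `0` corresponds to `P_{-1}`, `Q_{-1}`).  Then
`(P_k)` and `(Q_k)` are P-recursive over `K(z)`. -/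
theorem convergents_isPRecursive {K : Type*} [Field K] [CharZero K]
    (ℓ : ℕ) (hℓ : 1 ≤ ℓ)
    (p q : ℕ → Polynomial (RatFunc K))
    (hq : ∀ i < ℓ, ∀ k : ℕ, Polynomial.eval ((k : RatFunc K)) (q i) ≠ 0)
    (a : ℕ → RatFunc K)
    (ha : ∀ k : ℕ, a k =
      Polynomial.eval ((k : RatFunc K)) (p (k % ℓ)) /
        Polynomial.eval ((k : RatFunc K)) (q (k % ℓ)))
    (P Q : ℕ → RatFunc K)
    -- `P 0, Q 0` stand for `P₋₁, Q₋₁` and `P (k+1), Q (k+1)` for `P_k, Q_k`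
    (hPinit : P 0 = 1 ∧ P 1 = 0) (hQinit : Q 0 = 0 ∧ Q 1 = 1)
    (hPrec : ∀ k : ℕ, P (k + 2) = P (k + 1) + a (k + 1) * P k)
    (hQrec : ∀ k : ℕ, Q (k + 2) = Q (k + 1) + a (k + 1) * Q k) :
    IsPRecursive P ∧ IsPRecursive Q :=
  convergents_isPRecursive_general ℓ hℓ p q hq a ha P Q hPrec hQrec
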